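/- Let a be a symmetric, primitive random walk on ℤ that has an even step size, with characteristic function f(x) = ∑_{k∈ℤ} a(k) e^{ikx} and return probabilities c_n. Suppose η ∈ (0,1) and φ : [1−η, 1] → [0, π] is continuous on [1−η, 1], continuously differentiable on (1−η, 1), satisfies φ(1) = 0 and f(φ(y)) = y for all y ∈ [1−η, 1]. Then there exists μ > 0 such that c_n + (1/π) ∫_{1−η}^{1} y^n φ'(y) dy = o(e^{−μn}) as n → ∞. -/

import Mathlib

open Filter Asymptotics

/-- A random walk on `ℤ`: nonnegative step probabilities summing to `1`,
with `limsup a(n)^(1/n) < 1` (taken over both tails). -/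
def IsRandomWalk (a : ℤ → ℝ) : Prop :=
  (∀ n : ℤ, 0 ≤ a n) ∧ (∑' n : ℤ, a n) = 1 ∧
    Filter.limsup (fun n : ℕ => (max (a (n : ℤ)) (a (-(n : ℤ)))) ^ (1 / (n : ℝ)))
      Filter.atTop < 1

/-- The `n`-th return probability of the random walk `a`: the value at `0` of the
`n`-fold convolution of `a` with itself. -/
noncomputable def returnProb (a : ℤ → ℝ) (n : ℕ) : ℝ :=
  ∑' k : Fin n → ℤ, if (∑ i, k i) = 0 then ∏ i, a (k i) else 0

/-- The characteristic function `f(x) = ∑_{k ∈ ℤ} a(k) e^{i k x}` of the walk `a`. -/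
noncomputable def charFun (a : ℤ → ℝ) (x : ℝ) : ℂ :=
  ∑' k : ℤ, (a k : ℂ) * Complex.exp (Complex.I * k * x)

/-! For symmetric `a` the characteristic function is the real cosine series `g = cosSeries a`,
and Fourier inversion gives `π c_n = ∫_0^π g^n`. Since `g ∘ φ = id`, `φ` is a continuous
injection with `φ 1 = 0`, hence decreasing, and the substitution `x = φ y` turns
`∫_{1-η}^1 y^n φ'(y) dy` into `-∫_0^{φ(1-η)} g^n`; so the error term is
`(1/π) ∫_{φ(1-η)}^π g^n`. Primitivity and the even step give `|g| < 1` on `(0, π]`, hence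
`|g| ≤ M < 1` on the compact interval `[φ(1-η), π]`, and the error is `O(M^n)`. -/

open Set

section MultiIndex

variable {ι 𝕜 : Type*} [NormedField 𝕜] {f : ι → 𝕜}

theorem summable_prod_norm_fin (hf : Summable (‖f ·‖)) :
    ∀ n : ℕ, Summable fun k : Fin n → ι => ∏ i, ‖f (k i)‖
  | 0 => Summable.of_finite
  | n + 1 => by
    rw [← (Fin.consEquiv fun _ : Fin (n + 1) => ι).summable_iff]
    refine (hf.mul_of_nonneg (summable_prod_norm_fin hf n) (fun _ => norm_nonneg _)
      fun _ => Finset.prod_nonneg fun _ _ => norm_nonneg _).congr fun _ => ?_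
    simp [Fin.prod_univ_succ]

theorem tsum_pow_eq_tsum_prod_fin [CompleteSpace 𝕜] (hf : Summable (‖f ·‖)) :
    ∀ n : ℕ, (∑' k, f k) ^ n = ∑' k : Fin n → ι, ∏ i, f (k i)
  | 0 => by simp
  | n + 1 => by
    have hprod : Summable fun k : Fin n → ι => ‖∏ i, f (k i)‖ := by
      simpa only [norm_prod] using summable_prod_norm_fin hf n
    rw [pow_succ', tsum_pow_eq_tsum_prod_fin hf n, tsum_mul_tsum_of_summable_norm hf hprod,
      ← (Fin.consEquiv fun _ : Fin (n + 1) => ι).tsum_eq]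
    simp [Fin.prod_univ_succ]

end MultiIndex

theorem exists_pos_isLittleO_exp_of_lt_one {M : ℝ} (hM₀ : 0 ≤ M) (hM₁ : M < 1) :
    ∃ μ > 0, (fun n : ℕ => M ^ n) =o[atTop] fun n => Real.exp (-μ * n) := by
  have hr₀ : 0 < (M + 1) / 2 := by positivity
  have hr₁ : (M + 1) / 2 < 1 := by linarith
  refine ⟨-Real.log ((M + 1) / 2), neg_pos.2 (Real.log_neg hr₀ hr₁), ?_⟩
  have hexp : (fun n : ℕ => Real.exp (-(-Real.log ((M + 1) / 2)) * n)) =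
      fun n => ((M + 1) / 2) ^ n := by
    ext n
    rw [neg_neg, mul_comm, Real.exp_nat_mul, Real.exp_log hr₀]
  rw [hexp]
  exact isLittleO_pow_pow_of_lt_left hM₀ (by linarith)

theorem IsCompact.exists_lt_one_forall_abs_le {K : Set ℝ} (hK : IsCompact K) {g : ℝ → ℝ}
    (hg : ContinuousOn g K) (hlt : ∀ x ∈ K, |g x| < 1) :
    ∃ M, 0 ≤ M ∧ M < 1 ∧ ∀ x ∈ K, |g x| ≤ M := by
  rcases K.eq_empty_or_nonempty with rfl | hne
  · exact ⟨0, le_rfl, one_pos, by simp⟩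
  obtain ⟨z, hz, hmax⟩ := hK.exists_isMaxOn hne (continuous_abs.comp_continuousOn hg)
  exact ⟨|g z|, abs_nonneg _, hlt z hz, fun x hx => hmax hx⟩

theorem exists_pos_integral_pow_isLittleO_exp {g : ℝ → ℝ} (hg : Continuous g) {b c : ℝ}
    (hbc : b ≤ c) (hlt : ∀ x ∈ Icc b c, |g x| < 1) :
    ∃ μ > 0, (fun n : ℕ => ∫ x in b..c, g x ^ n) =o[atTop] fun n => Real.exp (-μ * n) := by
  obtain ⟨M, hM₀, hM₁, hgM⟩ :=
    isCompact_Icc.exists_lt_one_forall_abs_le hg.continuousOn hlt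
  obtain ⟨μ, hμ, hdecay⟩ := exists_pos_isLittleO_exp_of_lt_one hM₀ hM₁
  refine ⟨μ, hμ, IsBigO.trans_isLittleO (IsBigO.of_bound |c - b| ?_) hdecay⟩
  filter_upwards with n
  rw [mul_comm, Real.norm_of_nonneg (pow_nonneg hM₀ n)]
  refine intervalIntegral.norm_integral_le_of_norm_le_const fun x hx => ?_
  rw [uIoc_of_le hbc] at hx
  rw [norm_pow, Real.norm_eq_abs]
  exact pow_le_pow_left₀ (abs_nonneg _) (hgM x (Ioc_subset_Icc_self hx)) n

theorem intervalIntegral_mul_deriv_eq_of_leftInvOn {g φ : ℝ → ℝ} {A B : ℝ} (hAB : A ≤ B)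
    (hinv : LeftInvOn g φ (Icc A B)) (hφc : ContinuousOn φ (Icc A B))
    (hφd : ∀ y ∈ Ioo A B, DifferentiableAt ℝ φ y) (hφAB : φ B ≤ φ A) (G : ℝ → ℝ) :
    ∫ y in A..B, G y * deriv φ y = ∫ u in φ A..φ B, G (g u) := by
  have hanti : StrictAntiOn φ (Icc A B) := hφc.strictAntiOn_of_injOn_Icc hAB hφAB hinv.injOn
  have hderiv : ∀ y ∈ Ioo A B, deriv φ y ≤ 0 := fun y hy => by
    rw [← derivWithin_of_isOpen isOpen_Ioo hy]
    exact (hanti.antitoneOn.mono Ioo_subset_Icc_self).derivWithin_nonpos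
  rw [← intervalIntegral.integral_deriv_smul_comp_of_deriv_nonpos (f' := deriv φ)
    (uIcc_of_le hAB ▸ hφc)
    (by simpa [hAB] using fun y hy => (hφd y hy).hasDerivAt) (by simpa [hAB] using hderiv)]
  refine intervalIntegral.integral_congr fun y hy => ?_
  rw [uIcc_of_le hAB] at hy
  simp [hinv hy, mul_comm]

theorem cos_eq_one_of_closure_eq_top {S : Set ℤ} (hS : AddSubgroup.closure S = ⊤) {t : ℝ}
    (h : ∀ k ∈ S, Real.cos (k * t) = 1) : Real.cos t = 1 := by
  have h1 : (1 : ℤ) ∈ AddSubgroup.closure S := hS ▸ AddSubgroup.mem_top 1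
  suffices ∀ j ∈ AddSubgroup.closure S, ∃ m : ℤ, (m : ℝ) * (2 * Real.pi) = j * t by
    simpa [Real.cos_eq_one_iff] using this 1 h1
  intro j hj
  induction hj using AddSubgroup.closure_induction with
  | mem k hk => exact (Real.cos_eq_one_iff _).1 (h k hk)
  | zero => exact ⟨0, by simp⟩
  | add k l _ _ hk hl =>
    obtain ⟨m, hm⟩ := hk
    obtain ⟨m', hm'⟩ := hl
    exact ⟨m + m', by push_cast; linarith⟩
  | neg k _ hk =>
    obtain ⟨m, hm⟩ := hk
    exact ⟨-m, by push_cast; linarith⟩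

theorem eq_one_of_one_le_tsum_mul {ι : Type*} {a c : ι → ℝ} (hpos : ∀ k, 0 ≤ a k)
    (ha : HasSum a 1) (hc : ∀ k, c k ≤ 1) (hac : Summable fun k => a k * c k)
    (h : 1 ≤ ∑' k, a k * c k) {k : ι} (hk : a k ≠ 0) : c k = 1 := by
  have hnonneg : ∀ k, 0 ≤ a k * (1 - c k) := fun k => mul_nonneg (hpos k) (by linarith [hc k])
  have hsum : HasSum (fun k => a k * (1 - c k)) (1 - ∑' k, a k * c k) := by
    simpa [mul_sub] using ha.sub hac.hasSum
  have hzero : HasSum (fun k => a k * (1 - c k)) 0 := by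
    convert hsum using 1
    linarith [hsum.nonneg hnonneg]
  have := congr_fun ((hasSum_zero_iff_of_nonneg hnonneg).1 hzero) k
  simp only [Pi.zero_apply, mul_eq_zero, hk, false_or] at this
  linarith

section CosSeries

variable {a : ℤ → ℝ}

noncomputable def cosSeries (a : ℤ → ℝ) (x : ℝ) : ℝ := ∑' k : ℤ, a k * Real.cos (k * x)

theorem summable_mul_cos (ha : Summable a) (x : ℝ) :
    Summable fun k : ℤ => a k * Real.cos (k * x) :=
  ha.abs.of_norm_bounded fun k => by
    simpa [abs_mul] using mul_le_of_le_one_right (abs_nonneg (a k)) (Real.abs_cos_le_one (k * x))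

theorem continuous_cosSeries (ha : Summable a) : Continuous (cosSeries a) :=
  continuous_tsum (fun k => by fun_prop) ha.abs fun k x => by
    simpa [abs_mul] using mul_le_of_le_one_right (abs_nonneg (a k)) (Real.abs_cos_le_one (k * x))

theorem cosSeries_neg (x : ℝ) : cosSeries a (-x) = cosSeries a x := by
  simp [cosSeries]

theorem norm_ofReal_mul_exp_I_mul (r : ℝ) (k : ℤ) (x : ℝ) :
    ‖(r : ℂ) * Complex.exp (Complex.I * k * x)‖ = |r| := by
  simp [Complex.norm_exp]

theorem charFun_eq_cosSeries (ha : Summable a) (hsym : ∀ n, a n = a (-n)) (x : ℝ) :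
    charFun a x = cosSeries a x := by
  have hnorm : Summable fun k : ℤ => ‖(a k : ℂ) * Complex.exp (Complex.I * k * x)‖ := by
    simpa only [norm_ofReal_mul_exp_I_mul] using ha.abs
  have hrefl : charFun a x = ∑' k : ℤ, (a k : ℂ) * Complex.exp (-(Complex.I * k * x)) := by
    rw [charFun, ← (Equiv.neg ℤ).tsum_eq]
    simp [← hsym]
  have hnorm' : Summable fun k : ℤ => ‖(a k : ℂ) * Complex.exp (-(Complex.I * k * x))‖ := by
    simpa [Complex.norm_exp] using ha.abs
  have htwo : 2 * charFun a x = 2 * ∑' k : ℤ, ((a k * Real.cos (k * x) : ℝ) : ℂ) := by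
    rw [two_mul, ← tsum_mul_left]
    nth_rewrite 2 [hrefl]
    rw [charFun, ← hnorm.of_norm.tsum_add hnorm'.of_norm]
    congr 1; ext k
    rw [Complex.ofReal_mul, Complex.ofReal_cos, Complex.cos]
    push_cast
    ring_nf
  rw [mul_right_injective₀ two_ne_zero htwo, cosSeries, Complex.ofReal_tsum]

end CosSeries

section Fourier

variable {a : ℤ → ℝ}

theorem integral_exp_int_mul_I (m : ℤ) :
    ∫ x in -Real.pi..Real.pi, Complex.exp (Complex.I * m * x) =
      if m = 0 then 2 * (Real.pi : ℂ) else 0 := by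
  split_ifs with hm
  · simp [hm, two_mul]
  have hc : Complex.I * m ≠ 0 := mul_ne_zero Complex.I_ne_zero (by exact_mod_cast hm)
  have hperiod : Complex.exp (Complex.I * m * Real.pi) =
      Complex.exp (Complex.I * m * ((-Real.pi : ℝ) : ℂ)) := by
    rw [show Complex.I * m * (Real.pi : ℂ) = Complex.I * m * ((-Real.pi : ℝ) : ℂ) +
      m * (2 * Real.pi * Complex.I) by push_cast; ring, Complex.exp_add,
      Complex.exp_int_mul_two_pi_mul_I, mul_one]
  rw [integral_exp_mul_complex hc, hperiod, sub_self, zero_div]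

theorem charFun_pow (ha : Summable a) (x : ℝ) (n : ℕ) :
    charFun a x ^ n = ∑' k : Fin n → ℤ,
      ((∏ i, a (k i) : ℝ) : ℂ) * Complex.exp (Complex.I * (∑ i, k i : ℤ) * x) := by
  have hnorm : Summable fun k : ℤ => ‖(a k : ℂ) * Complex.exp (Complex.I * k * x)‖ := by
    simpa only [norm_ofReal_mul_exp_I_mul] using ha.abs
  rw [charFun, tsum_pow_eq_tsum_prod_fin hnorm]
  congr 1; ext k
  rw [Finset.prod_mul_distrib, ← Complex.exp_sum]
  push_cast
  simp only [Finset.mul_sum, Finset.sum_mul]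

theorem integral_charFun_pow (ha : Summable a) (n : ℕ) :
    ∫ x in -Real.pi..Real.pi, charFun a x ^ n = 2 * Real.pi * returnProb a n := by
  have hbound : Summable fun k : Fin n → ℤ => ∏ i, |a (k i)| := summable_prod_norm_fin ha.norm n
  have hsum := intervalIntegral.hasSum_integral_of_dominated_convergence
    (F := fun (k : Fin n → ℤ) x =>
      ((∏ i, a (k i) : ℝ) : ℂ) * Complex.exp (Complex.I * (∑ i, k i : ℤ) * x))
    (f := fun x => charFun a x ^ n) (μ := MeasureTheory.volume) (a := -Real.pi) (b := Real.pi)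
    (fun k _ => ∏ i, |a (k i)|) (fun k => by fun_prop)
    (fun k => .of_forall fun x _ =>
      ((norm_ofReal_mul_exp_I_mul _ _ _).trans (Finset.abs_prod _ _)).le)
    (.of_forall fun _ _ => hbound) intervalIntegrable_const
    (.of_forall fun x _ => by
      rw [charFun_pow ha]
      exact (hbound.of_norm_bounded fun k =>
        ((norm_ofReal_mul_exp_I_mul _ _ _).trans (Finset.abs_prod _ _)).le).hasSum)
  rw [← hsum.tsum_eq, returnProb, Complex.ofReal_tsum, ← tsum_mul_left]
  congr 1; ext k
  rw [intervalIntegral.integral_const_mul, integral_exp_int_mul_I]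
  split_ifs <;> push_cast <;> ring

theorem integral_cosSeries_pow (ha : Summable a) (hsym : ∀ n, a n = a (-n)) (n : ℕ) :
    ∫ x in -Real.pi..Real.pi, cosSeries a x ^ n = 2 * Real.pi * returnProb a n := by
  have h := integral_charFun_pow ha n
  simp only [charFun_eq_cosSeries ha hsym, ← Complex.ofReal_pow,
    intervalIntegral.integral_ofReal] at h
  exact_mod_cast h

theorem integral_zero_pi_cosSeries_pow (ha : Summable a) (hsym : ∀ n, a n = a (-n)) (n : ℕ) :
    ∫ x in (0 : ℝ)..Real.pi, cosSeries a x ^ n = Real.pi * returnProb a n := by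
  have hint : ∀ b c, IntervalIntegrable (fun x => cosSeries a x ^ n) MeasureTheory.volume b c :=
    ((continuous_cosSeries ha).pow n).intervalIntegrable
  have hsymm :
      ∫ x in -Real.pi..0, cosSeries a x ^ n = ∫ x in (0 : ℝ)..Real.pi, cosSeries a x ^ n := by
    simpa [cosSeries_neg] using
      intervalIntegral.integral_comp_neg (a := -Real.pi) (b := 0) fun x => cosSeries a x ^ n
  have := intervalIntegral.integral_add_adjacent_intervals (hint (-Real.pi) 0) (hint 0 Real.pi)
  rw [hsymm, integral_cosSeries_pow ha hsym] at this
  linarith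

end Fourier

theorem abs_cosSeries_lt_one {a : ℤ → ℝ} (hpos : ∀ n, 0 ≤ a n) (h1 : HasSum a 1)
    (hprim : AddSubgroup.closure {n : ℤ | a n ≠ 0} = ⊤) (heven : ∃ n : ℤ, Even n ∧ a n ≠ 0)
    {x : ℝ} (hx₀ : 0 < x) (hxπ : x ≤ Real.pi) : |cosSeries a x| < 1 := by
  have hx : x ∈ Icc 0 Real.pi := ⟨hx₀.le, hxπ⟩
  have hcos := summable_mul_cos h1.summable x
  by_contra! hge
  rcases le_abs'.1 hge with hneg | hone
  · -- all steps `k` satisfy `cos (k x) = -1`, so `cos (2 k x) = 1`; primitivity forces `x = π`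
    have hstep : ∀ k : ℤ, a k ≠ 0 → Real.cos (k * x) = -1 := fun k hk => by
      have := eq_one_of_one_le_tsum_mul hpos h1 (c := fun k : ℤ => -Real.cos (k * x))
        (fun k => by linarith [Real.neg_one_le_cos (k * x)]) (by simpa using hcos.neg)
        (by simp only [mul_neg, tsum_neg]; exact le_neg_of_le_neg hneg) hk
      linarith
    have hcos2 : Real.cos (2 * x) = 1 := cos_eq_one_of_closure_eq_top hprim fun k hk => by
      rw [show (k : ℝ) * (2 * x) = 2 * (k * x) by ring, Real.cos_two_mul, hstep k hk]
      norm_num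
    have hxπ' : x = Real.pi := by
      rcases (mul_self_eq_one_iff (a := Real.cos x)).1
        (by linarith [Real.cos_two_mul x, sq (Real.cos x)]) with h | h
      · exact absurd (Real.injOn_cos hx ⟨le_rfl, Real.pi_pos.le⟩ (h.trans Real.cos_zero.symm))
          hx₀.ne'
      · exact Real.injOn_cos hx ⟨Real.pi_pos.le, le_rfl⟩ (h.trans Real.cos_pi.symm)
    obtain ⟨n, ⟨j, rfl⟩, hn⟩ := heven
    have := hstep _ hn
    rw [hxπ', show ((j + j : ℤ) : ℝ) * Real.pi = j * (2 * Real.pi) by push_cast; ring,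
      Real.cos_int_mul_two_pi] at this
    norm_num at this
  · have hstep : ∀ k ∈ {n : ℤ | a n ≠ 0}, Real.cos (k * x) = 1 := fun k hk =>
      eq_one_of_one_le_tsum_mul hpos h1 (fun k => Real.cos_le_one (k * x)) hcos hone hk
    exact hx₀.ne' (Real.injOn_cos hx ⟨le_rfl, Real.pi_pos.le⟩
      ((cos_eq_one_of_closure_eq_top hprim hstep).trans Real.cos_zero.symm))

theorem IsRandomWalk.hasSum_one {a : ℤ → ℝ} (ha : IsRandomWalk a) : HasSum a 1 := by
  obtain ⟨-, h1, -⟩ := ha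
  have hs : Summable a := by
    by_contra h
    simp [tsum_eq_zero_of_not_summable h] at h1
  exact h1 ▸ hs.hasSum

theorem returnProb_add_integral_mul_deriv_eq {a : ℤ → ℝ} (ha : Summable a)
    (hsym : ∀ n, a n = a (-n)) {A : ℝ} {φ : ℝ → ℝ} (hA : A ≤ 1)
    (hleft : LeftInvOn (cosSeries a) φ (Icc A 1)) (hcont : ContinuousOn φ (Icc A 1))
    (hdiff : ∀ y ∈ Ioo A 1, DifferentiableAt ℝ φ y) (hone : φ 1 = 0) (hφA : 0 ≤ φ A) (n : ℕ) :
    returnProb a n + 1 / Real.pi * ∫ y in A..1, y ^ n * deriv φ y =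
      1 / Real.pi * ∫ x in φ A..Real.pi, cosSeries a x ^ n := by
  have hint : ∀ b c, IntervalIntegrable (fun x => cosSeries a x ^ n) MeasureTheory.volume b c :=
    ((continuous_cosSeries ha).pow n).intervalIntegrable
  have hsplit :=
    intervalIntegral.integral_add_adjacent_intervals (hint 0 (φ A)) (hint (φ A) Real.pi)
  rw [integral_zero_pi_cosSeries_pow ha hsym] at hsplit
  rw [intervalIntegral_mul_deriv_eq_of_leftInvOn hA hleft hcont hdiff (hone ▸ hφA) (· ^ n), hone,
    intervalIntegral.integral_symm]
  field_simp
  linarith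

theorem returnProb_integral_estimate_type1_general (a : ℤ → ℝ) (ha : IsRandomWalk a)
    (hsym : ∀ n : ℤ, a n = a (-n))
    (hprim : AddSubgroup.closure {n : ℤ | a n ≠ 0} = ⊤)
    (heven : ∃ n : ℤ, Even n ∧ a n ≠ 0)
    (η : ℝ) (hη : η ∈ Set.Ioo (0 : ℝ) 1) (φ : ℝ → ℝ)
    (hmaps : ∀ y ∈ Set.Icc (1 - η) 1, φ y ∈ Set.Icc 0 Real.pi)
    (hcont : ContinuousOn φ (Set.Icc (1 - η) 1))
    (hdiff : ∀ y ∈ Set.Ioo (1 - η) 1, DifferentiableAt ℝ φ y)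
    (hone : φ 1 = 0)
    (hinv : ∀ y ∈ Set.Icc (1 - η) 1, charFun a (φ y) = (y : ℂ)) :
    ∃ μ : ℝ, 0 < μ ∧
      (fun n : ℕ => returnProb a n + (1 / Real.pi) * ∫ y in (1 - η)..1, y ^ n * deriv φ y)
        =o[Filter.atTop] fun n : ℕ => Real.exp (-μ * n) := by
  have h1 := ha.hasSum_one
  have hA : 1 - η ≤ 1 := by linarith [hη.1]
  have hleft : LeftInvOn (cosSeries a) φ (Icc (1 - η) 1) := fun y hy => by
    exact_mod_cast (charFun_eq_cosSeries h1.summable hsym _).symm.trans (hinv y hy)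
  have hx₀ : φ (1 - η) ∈ Icc 0 Real.pi := hmaps _ ⟨le_rfl, hA⟩
  have hx₀pos : 0 < φ (1 - η) := by
    refine hx₀.1.lt_of_ne fun h => ?_
    have := hleft ⟨le_rfl, hA⟩
    simp [← h, cosSeries, h1.tsum_eq] at this
    linarith [hη.1]
  obtain ⟨μ, hμ, hdecay⟩ := exists_pos_integral_pow_isLittleO_exp
    (continuous_cosSeries h1.summable) hx₀.2 fun x hx =>
      abs_cosSeries_lt_one ha.1 h1 hprim heven (hx₀pos.trans_le hx.1) hx.2
  refine ⟨μ, hμ, ?_⟩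
  simpa only [returnProb_add_integral_mul_deriv_eq h1.summable hsym hA hleft hcont hdiff hone hx₀.1]
    using hdecay.const_mul_left (1 / Real.pi)

/-- Type 1 estimate: for a symmetric, primitive random walk with an even step size,
`c_n + (1/π) ∫_(1-η)^1 y^n φ'(y) dy = o(e^(-μn))` for some `μ > 0`, where `φ` is a
local inverse of the characteristic function. -/
theorem returnProb_integral_estimate_type1 (a : ℤ → ℝ) (ha : IsRandomWalk a)
    (hsym : ∀ n : ℤ, a n = a (-n))
    (hprim : AddSubgroup.closure {n : ℤ | a n ≠ 0} = ⊤)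
    (heven : ∃ n : ℤ, Even n ∧ a n ≠ 0)
    (η : ℝ) (hη : η ∈ Set.Ioo (0 : ℝ) 1) (φ : ℝ → ℝ)
    (hmaps : ∀ y ∈ Set.Icc (1 - η) 1, φ y ∈ Set.Icc 0 Real.pi)
    (hcont : ContinuousOn φ (Set.Icc (1 - η) 1))
    (hdiff : ∀ y ∈ Set.Ioo (1 - η) 1, DifferentiableAt ℝ φ y)
    (hderiv_cont : ContinuousOn (deriv φ) (Set.Ioo (1 - η) 1))
    (hone : φ 1 = 0)
    (hinv : ∀ y ∈ Set.Icc (1 - η) 1, charFun a (φ y) = (y : ℂ)) :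
    ∃ μ : ℝ, 0 < μ ∧
      (fun n : ℕ => returnProb a n + (1 / Real.pi) * ∫ y in (1 - η)..1, y ^ n * deriv φ y)
        =o[Filter.atTop] fun n : ℕ => Real.exp (-μ * n) :=
  returnProb_integral_estimate_type1_general a ha hsym hprim heven η hη φ hmaps hcont hdiff hone
    hinv
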